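/- Local asymptotic normality for contamination alternatives: let Z_1, Z_2, … be i.i.d. with distribution F, let L ≪ F with square-integrable density ℓ, and set F^{(N)} = (1 − α/√N)F + (α/√N)L. Then as N → ∞, | log ∏_{i=1}^N (dF^{(N)}/dF)(Z_i) − (α/√N) Σ_{i=1}^N (ℓ(Z_i) − 1) + (α²/2) E[(ℓ(Z_1) − 1)²] | converges to 0 in probability under F. -/

import Mathlib

open MeasureTheory Filter Topology


lemma lan_log_taylor_bound {y : ℝ} (hy : |y| ≤ 1/2) :
    |Real.log (1 + y) - y + y ^ 2 / 2| ≤ 2 * |y| ^ 3 := by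
  have h1 : |(-y)| < 1 := by rw [abs_neg]; linarith
  have h := Real.abs_log_sub_add_sum_range_le h1 2
  have hsum : (∑ i ∈ Finset.range 2, (-y) ^ (i + 1) / (i + 1)) = -y + y ^ 2 / 2 := by
    norm_num [Finset.sum_range_succ]
  rw [hsum, sub_neg_eq_add, abs_neg] at h
  have heq : Real.log (1 + y) - y + y ^ 2 / 2 = -y + y ^ 2 / 2 + Real.log (1 + y) := by ring
  rw [heq]
  refine h.trans ?_
  have hpos : (1:ℝ)/2 ≤ 1 - |y| := by linarith
  calc |y| ^ 3 / (1 - |y|) ≤ |y| ^ 3 / (1/2) :=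
        div_le_div_of_nonneg_left (by positivity) (by norm_num) hpos
    _ = 2 * |y| ^ 3 := by ring


lemma lan_max_le_eventually (a : ℕ → ℝ) (h0 : ∀ i, 0 ≤ a i) (m : ℝ)
    (hb : Tendsto (fun n : ℕ => (n : ℝ)⁻¹ * ∑ i ∈ Finset.range n, a i) atTop (𝓝 m))
    (ε : ℝ) (hε : 0 < ε) : ∀ᶠ N : ℕ in atTop, ∀ i < N, a i ≤ ε * N := by
  set S : ℕ → ℝ := fun n => ∑ i ∈ Finset.range n, a i with hS
  have h1 : Tendsto (fun n : ℕ => ((n : ℝ) + 1)⁻¹ * S (n + 1)) atTop (𝓝 m) := by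
    have := hb.comp (tendsto_add_atTop_nat 1)
    refine this.congr fun n => ?_
    simp only [Function.comp_apply, S]
    push_cast
    ring
  have h2 : Tendsto (fun n : ℕ => (1 + (n : ℝ)⁻¹)) atTop (𝓝 1) := by
    have := tendsto_inv_atTop_zero.comp (tendsto_natCast_atTop_atTop (R := ℝ))
    simpa using tendsto_const_nhds.add this
  have h3 : Tendsto (fun n : ℕ =>
      (1 + (n : ℝ)⁻¹) * (((n : ℝ) + 1)⁻¹ * S (n + 1)) - (n : ℝ)⁻¹ * S n) atTop (𝓝 0) := by
    have := (h2.mul h1).sub hb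
    simpa using this
  have h4 : Tendsto (fun n : ℕ => a n * (n : ℝ)⁻¹) atTop (𝓝 0) := by
    apply h3.congr'
    filter_upwards [eventually_ge_atTop 1] with n hn
    have hn' : (n : ℝ) ≠ 0 := by positivity
    have hSn : S (n + 1) = S n + a n := Finset.sum_range_succ a n
    have hn1 : (n : ℝ) + 1 ≠ 0 := by positivity
    rw [hSn]
    field_simp
    ring
  obtain ⟨K, hK⟩ := eventually_atTop.1 (h4.eventually (gt_mem_nhds hε))
  set K' := max K 1 with hK'
  set C := S K' with hC
  have hC0 : 0 ≤ C := Finset.sum_nonneg fun i _ => h0 i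
  refine eventually_atTop.2 ⟨max K' (⌈C / ε⌉₊ + 1), fun N hN i hi => ?_⟩
  have hNK : K' ≤ N := le_trans (le_max_left _ _) hN
  have hNC : C ≤ ε * N := by
    have h5 : C / ε ≤ (⌈C / ε⌉₊ : ℝ) := Nat.le_ceil _
    have h6 : (⌈C / ε⌉₊ : ℝ) ≤ (N : ℝ) := by
      have : ⌈C / ε⌉₊ ≤ N := le_trans (Nat.le_succ _) (le_trans (le_max_right _ _) hN)
      exact_mod_cast this
    calc C = (C / ε) * ε := by field_simp
      _ ≤ (N : ℝ) * ε := mul_le_mul_of_nonneg_right (h5.trans h6) hε.le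
      _ = ε * N := mul_comm _ _
  rcases le_or_gt K' i with hKi | hKi
  · have hi1 : 1 ≤ i := le_trans (le_max_right _ _) hKi
    have hipos : (0 : ℝ) < i := by exact_mod_cast hi1
    have := hK i (le_trans (le_max_left _ _) hKi)
    have h7 : a i ≤ ε * i := by
      have := (mul_le_mul_of_nonneg_right this.le hipos.le)
      calc a i = a i * (i : ℝ)⁻¹ * i := by field_simp
        _ ≤ ε * i := this
    exact h7.trans (by
      have : (i : ℝ) ≤ N := by exact_mod_cast hi.le
      nlinarith)
  · have : a i ≤ C := by
      have := Finset.single_le_sum (f := a) (fun j _ => h0 j) (Finset.mem_range.2 hKi)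
      exact this
    exact this.trans hNC

lemma lan_aux_tendsto (α m : ℝ) (hα : 0 < α) (hm : 0 ≤ m) (X : ℕ → ℝ)
    (hb : Tendsto (fun n : ℕ => (n : ℝ)⁻¹ * ∑ i ∈ Finset.range n, X i ^ 2) atTop (𝓝 m)) :
    Tendsto (fun N : ℕ => (∑ i ∈ Finset.range N, Real.log (1 + (α / Real.sqrt N) * X i))
      - (α / Real.sqrt N) * (∑ i ∈ Finset.range N, X i) + (α ^ 2 / 2) * m) atTop (𝓝 0) := by
  rw [NormedAddCommGroup.tendsto_nhds_zero]
  intro ε hε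
  set δ : ℝ := min (1/2) (ε / (4 * α ^ 2 * (m + 1))) with hδ
  have hδ0 : 0 < δ := lt_min (by norm_num) (by positivity)
  have hδhalf : δ ≤ 1/2 := min_le_left _ _
  have hδ2 : δ ≤ ε / (4 * α ^ 2 * (m + 1)) := min_le_right _ _
  have hmax := lan_max_le_eventually (fun i => X i ^ 2) (fun i => sq_nonneg _) m hb
    (δ ^ 2 / α ^ 2) (by positivity)
  have hclose : ∀ᶠ n : ℕ in atTop,
      |(n : ℝ)⁻¹ * ∑ i ∈ Finset.range n, X i ^ 2 - m| < min 1 (ε / (2 * α ^ 2)) := by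
    have := hb.eventually (Metric.ball_mem_nhds m (show (0:ℝ) < min 1 (ε / (2 * α ^ 2)) by positivity))
    simpa [Real.dist_eq] using this
  filter_upwards [hmax, hclose, eventually_ge_atTop 1] with n hmaxn hclosen hn1
  set B : ℝ := (n : ℝ)⁻¹ * ∑ i ∈ Finset.range n, X i ^ 2 with hB
  have hnpos : (0 : ℝ) < n := by exact_mod_cast hn1
  have hs0 : 0 < Real.sqrt n := Real.sqrt_pos.2 hnpos
  set c : ℝ := α / Real.sqrt n with hc
  have hc0 : 0 < c := div_pos hα hs0
  have hs2 : Real.sqrt n ^ 2 = (n : ℝ) := Real.sq_sqrt (Nat.cast_nonneg n)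
  have hc2 : c ^ 2 = α ^ 2 / n := by rw [hc, div_pow, hs2]
  -- each |c * X i| ≤ δ
  have hy : ∀ i < n, |c * X i| ≤ δ := by
    intro i hi
    have h1 : (c * X i) ^ 2 ≤ δ ^ 2 := by
      have h2 := hmaxn i hi
      have h3 : (c * X i) ^ 2 = α ^ 2 * X i ^ 2 / n := by rw [mul_pow, hc2]; ring
      rw [h3]
      rw [div_le_iff₀ hnpos]
      calc α ^ 2 * X i ^ 2 ≤ α ^ 2 * (δ ^ 2 / α ^ 2 * n) :=
            mul_le_mul_of_nonneg_left h2 (sq_nonneg α)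
        _ = δ ^ 2 * n := by field_simp
    calc |c * X i| = Real.sqrt ((c * X i) ^ 2) := (Real.sqrt_sq_eq_abs _).symm
      _ ≤ Real.sqrt (δ ^ 2) := Real.sqrt_le_sqrt h1
      _ = δ := Real.sqrt_sq hδ0.le
  -- sum of squares identity
  have hSsq : ∑ i ∈ Finset.range n, (c * X i) ^ 2 = α ^ 2 * B := by
    have h5 : ∀ i, (c * X i) ^ 2 = (α ^ 2 / n) * X i ^ 2 := fun i => by rw [mul_pow, hc2]
    simp_rw [h5]
    rw [← Finset.mul_sum, hB]
    field_simp
  have hdecomp : ∑ i ∈ Finset.range n, Real.log (1 + c * X i)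
        - c * ∑ i ∈ Finset.range n, X i + α ^ 2 / 2 * m
      = (∑ i ∈ Finset.range n, (Real.log (1 + c * X i) - c * X i + (c * X i) ^ 2 / 2))
        - α ^ 2 / 2 * B + α ^ 2 / 2 * m := by
    rw [Finset.sum_add_distrib, Finset.sum_sub_distrib, ← Finset.mul_sum, ← Finset.sum_div, hSsq]
    ring
  have hr : ∀ i ∈ Finset.range n,
      |Real.log (1 + c * X i) - c * X i + (c * X i) ^ 2 / 2| ≤ 2 * δ * (c * X i) ^ 2 := by
    intro i hi
    have hyi := hy i (Finset.mem_range.1 hi)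
    refine (lan_log_taylor_bound (y := c * X i) (hyi.trans hδhalf)).trans ?_
    have h1 : |c * X i| ^ 3 = |c * X i| * (c * X i) ^ 2 := by
      rw [pow_succ, sq_abs]; ring
    have h2 : |c * X i| * (c * X i) ^ 2 ≤ δ * (c * X i) ^ 2 :=
      mul_le_mul_of_nonneg_right hyi (sq_nonneg _)
    calc 2 * |c * X i| ^ 3 = 2 * (|c * X i| * (c * X i) ^ 2) := by rw [h1]
      _ ≤ 2 * (δ * (c * X i) ^ 2) := by linarith
      _ = 2 * δ * (c * X i) ^ 2 := by ring
  have hsum_r : |∑ i ∈ Finset.range n,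
        (Real.log (1 + c * X i) - c * X i + (c * X i) ^ 2 / 2)| ≤ 2 * δ * (α ^ 2 * B) := by
    calc |∑ i ∈ Finset.range n, (Real.log (1 + c * X i) - c * X i + (c * X i) ^ 2 / 2)|
        ≤ ∑ i ∈ Finset.range n, |Real.log (1 + c * X i) - c * X i + (c * X i) ^ 2 / 2| :=
          Finset.abs_sum_le_sum_abs _ _
      _ ≤ ∑ i ∈ Finset.range n, 2 * δ * (c * X i) ^ 2 := Finset.sum_le_sum hr
      _ = 2 * δ * (α ^ 2 * B) := by rw [← Finset.mul_sum, hSsq]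
  have hB1 : |B - m| < 1 := (lt_min_iff.1 hclosen).1
  have hB2 : |B - m| < ε / (2 * α ^ 2) := (lt_min_iff.1 hclosen).2
  have hBle : B ≤ m + 1 := by
    have := (abs_sub_lt_iff.1 hB1).1
    linarith
  rw [Real.norm_eq_abs, hdecomp]
  have htri : |(∑ i ∈ Finset.range n, (Real.log (1 + c * X i) - c * X i + (c * X i) ^ 2 / 2))
        - α ^ 2 / 2 * B + α ^ 2 / 2 * m|
      ≤ |∑ i ∈ Finset.range n, (Real.log (1 + c * X i) - c * X i + (c * X i) ^ 2 / 2)|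
        + α ^ 2 / 2 * |B - m| := by
    have heq2 : (∑ i ∈ Finset.range n, (Real.log (1 + c * X i) - c * X i + (c * X i) ^ 2 / 2))
        - α ^ 2 / 2 * B + α ^ 2 / 2 * m
      = (∑ i ∈ Finset.range n, (Real.log (1 + c * X i) - c * X i + (c * X i) ^ 2 / 2))
        + α ^ 2 / 2 * (m - B) := by ring
    rw [heq2]
    refine (abs_add_le _ _).trans ?_
    rw [abs_mul, abs_of_nonneg (show (0:ℝ) ≤ α ^ 2 / 2 by positivity), abs_sub_comm]
  have h8 : 2 * δ * (α ^ 2 * B) ≤ ε / 2 := by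
    have hP : (0:ℝ) < α ^ 2 * (m + 1) := by positivity
    have h9 : 2 * δ * (α ^ 2 * B) ≤ 2 * δ * (α ^ 2 * (m + 1)) := by
      have := mul_le_mul_of_nonneg_left hBle (show (0:ℝ) ≤ 2 * δ * α ^ 2 by positivity)
      nlinarith
    refine h9.trans ?_
    have h10 := mul_le_mul_of_nonneg_right hδ2 (show (0:ℝ) ≤ 2 * (α ^ 2 * (m + 1)) by positivity)
    calc 2 * δ * (α ^ 2 * (m + 1)) = δ * (2 * (α ^ 2 * (m + 1))) := by ring
      _ ≤ ε / (4 * α ^ 2 * (m + 1)) * (2 * (α ^ 2 * (m + 1))) := h10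
      _ = ε / 2 := by field_simp; ring
  have h11 : α ^ 2 / 2 * |B - m| ≤ ε / 4 := by
    have h12 := mul_le_mul_of_nonneg_left hB2.le (show (0:ℝ) ≤ α ^ 2 / 2 by positivity)
    have hα0 : α ≠ 0 := ne_of_gt hα
    have heq3 : α ^ 2 / 2 * (ε / (2 * α ^ 2)) = ε / 4 := by field_simp; ring
    linarith
  calc |(∑ i ∈ Finset.range n, (Real.log (1 + c * X i) - c * X i + (c * X i) ^ 2 / 2))
        - α ^ 2 / 2 * B + α ^ 2 / 2 * m|
      ≤ 2 * δ * (α ^ 2 * B) + α ^ 2 / 2 * |B - m| := htri.trans (by linarith)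
    _ ≤ ε / 2 + ε / 4 := by linarith
    _ < ε := by linarith


/-- **Local asymptotic normality for contamination alternatives.**
Let `Z_1, Z_2, …` be i.i.d. with distribution `F`, let `L ≪ F` with square-integrable density
`ℓ`, and `F⁽ᴺ⁾ = (1 − α/√N)F + (α/√N)L`, whose Radon–Nikodym derivative with respect to `F` is
`z ↦ 1 + (α/√N)(ℓ(z) − 1)`. Then, as `N → ∞`,
`| log ∏_{i=1}^N (dF⁽ᴺ⁾/dF)(Z_i) − (α/√N) Σ_{i=1}^N (ℓ(Z_i) − 1)
   + (α²/2) E[(ℓ(Z_1) − 1)²] | → 0` in probability under `F`. -/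
theorem local_asymptotic_normality
    {Ω Z : Type*} [MeasurableSpace Ω] [MeasurableSpace Z]
    (μ : Measure Ω) [IsProbabilityMeasure μ]
    (F L : Measure Z) [IsProbabilityMeasure F] [IsProbabilityMeasure L]
    (ℓ : Z → ℝ) (hℓmeas : Measurable ℓ) (hℓ0 : ∀ z, 0 ≤ ℓ z)
    (hL : L = F.withDensity fun z => ENNReal.ofReal (ℓ z))
    (hℓ2 : Integrable (fun z => ℓ z ^ 2) F)
    (Zv : ℕ → Ω → Z) (hZmeas : ∀ i, Measurable (Zv i))
    (hindep : ProbabilityTheory.iIndepFun Zv μ)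
    (hdist : ∀ i, μ.map (Zv i) = F)
    (α : ℝ) (hα : 0 < α) :
    ∀ ε > (0 : ℝ), Tendsto (fun N : ℕ => μ {ω : Ω |
        ε ≤ |(∑ i ∈ Finset.range N,
                Real.log (1 + (α / Real.sqrt N) * (ℓ (Zv i ω) - 1)))
              - (α / Real.sqrt N) * (∑ i ∈ Finset.range N, (ℓ (Zv i ω) - 1))
              + (α ^ 2 / 2) * ∫ z, (ℓ z - 1) ^ 2 ∂F|})
      atTop (𝓝 0) := by
  classical
  set g : Z → ℝ := fun z => (ℓ z - 1) ^ 2 with hgdef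
  have hgmeas : Measurable g := (hℓmeas.sub measurable_const).pow_const 2
  have hgint : Integrable g F := by
    have hbound : Integrable (fun z => 2 * ℓ z ^ 2 + 2) F :=
      (hℓ2.const_mul 2).add (integrable_const 2)
    refine hbound.mono' hgmeas.aestronglyMeasurable ?_
    filter_upwards with z
    rw [Real.norm_eq_abs, abs_of_nonneg (sq_nonneg _)]
    simp only [hgdef]
    nlinarith [sq_nonneg (ℓ z + 1)]
  set m := ∫ z, (ℓ z - 1) ^ 2 ∂F with hmdef
  have hm0 : 0 ≤ m := integral_nonneg fun z => sq_nonneg _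
  set X : ℕ → Ω → ℝ := fun i ω => g (Zv i ω) with hXdef
  have hXint : Integrable (X 0) μ := by
    have h := (integrable_map_measure hgmeas.aestronglyMeasurable
      (hZmeas 0).aemeasurable).mp (by rwa [hdist 0])
    exact h
  have hXindep : Pairwise (Function.onFun (ProbabilityTheory.IndepFun · · μ) X) := by
    intro i j hij
    exact (ProbabilityTheory.iIndepFun.indepFun hindep hij).comp hgmeas hgmeas
  have hXident : ∀ i, ProbabilityTheory.IdentDistrib (X i) (X 0) μ μ := by
    intro i
    have hid : ProbabilityTheory.IdentDistrib (Zv i) (Zv 0) μ μ :=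
      ⟨(hZmeas i).aemeasurable, (hZmeas 0).aemeasurable, by rw [hdist i, hdist 0]⟩
    exact hid.comp hgmeas
  have hslln := ProbabilityTheory.strong_law_ae X hXint hXindep hXident
  have hEX : (∫ ω, X 0 ω ∂μ) = m := by
    rw [hmdef, ← hdist 0, integral_map (hZmeas 0).aemeasurable hgmeas.aestronglyMeasurable]
  rw [hEX] at hslln
  set f : ℕ → Ω → ℝ := fun N ω =>
      (∑ i ∈ Finset.range N, Real.log (1 + (α / Real.sqrt N) * (ℓ (Zv i ω) - 1)))
        - (α / Real.sqrt N) * (∑ i ∈ Finset.range N, (ℓ (Zv i ω) - 1))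
        + (α ^ 2 / 2) * m with hfdef
  have hae : ∀ᵐ ω ∂μ, Tendsto (fun N => f N ω) atTop (𝓝 ((fun _ : Ω => (0:ℝ)) ω)) := by
    filter_upwards [hslln] with ω hω
    have hb : Tendsto (fun n : ℕ => (n : ℝ)⁻¹ * ∑ i ∈ Finset.range n, (ℓ (Zv i ω) - 1) ^ 2)
        atTop (𝓝 m) := by
      simpa [smul_eq_mul, hXdef, hgdef] using hω
    simpa [hfdef] using lan_aux_tendsto α m hα hm0 (fun i => ℓ (Zv i ω) - 1) hb
  have hfmeas : ∀ N, AEStronglyMeasurable (f N) μ := by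
    intro N
    apply Measurable.aestronglyMeasurable
    apply Measurable.add
    · apply Measurable.sub
      · exact Finset.measurable_sum _ fun i _ =>
          (measurable_const.add (measurable_const.mul
            ((hℓmeas.comp (hZmeas i)).sub measurable_const))).log
      · exact measurable_const.mul (Finset.measurable_sum _ fun i _ =>
          (hℓmeas.comp (hZmeas i)).sub measurable_const)
    · exact measurable_const
  intro ε hε
  have H := MeasureTheory.tendstoInMeasure_iff_dist.1 (MeasureTheory.tendstoInMeasure_of_tendsto_ae hfmeas hae) ε hε
  simpa only [hfdef, Real.dist_eq, sub_zero] using H
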